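/- arXiv:2409.13627 — 2 statements merged into one kernel-verified Lean document; each statement's English description precedes it below -/
import Mathlib

section
/- Every solution Z of the limiting equation satisfies, for every t ≥ 0, the mass bound ⟨Z_t,1⟩ ≤ ⟨Z_0,1⟩ · exp(B1 t + (B2/2) t²). -/
open MeasureTheory Set
open scoped RealInnerProductSpace ENNReal NNReal BigOperators

noncomputable section

/-- The plane `ℝ²`, with its Euclidean norm. -/
abbrev R2 : Type := EuclideanSpace ℝ (Fin 2)

/-- The σ-algebra on `M(ℝ²)` inherited from the canonical σ-algebra on measures. -/
noncomputable instance : MeasurableSpace (FiniteMeasure R2) := by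
  unfold FiniteMeasure; infer_instance

/-- The Laplacian of `f : ℝ² → ℝ`, written as the sum of the second derivatives in the
directions of the standard basis. -/
def lap2 (f : R2 → ℝ) (x : R2) : ℝ :=
  ∑ i : Fin 2, fderiv ℝ (fun y => fderiv ℝ f y (EuclideanSpace.single i 1)) x
    (EuclideanSpace.single i 1)

/-- The interaction drift `∫_0^s ∫_{ℝ²} L_{s-r}(x-y) Z_r(dy) dr`. -/
def driftTerm (L : ℝ → R2 → R2) (Z : ℝ → FiniteMeasure R2) (s : ℝ) (x : R2) : R2 :=
  ∫ r in (0:ℝ)..s, ∫ y, L (s - r) (x - y) ∂(Z r : Measure R2)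

/-- Test functions of class `C_b^{1,2}([0,T] × ℝ²)`: bounded, `C¹` in time and `C²` in space,
with bounded first and second order derivatives. -/
structure IsTestFun (T : ℝ) (f : ℝ → R2 → ℝ) : Prop where
  bounded : ∃ M, ∀ s x, |f s x| ≤ M
  time_diff : ∀ x, ContDiffOn ℝ 1 (fun s => f s x) (Icc 0 T)
  space_diff : ∀ s ∈ Icc (0:ℝ) T, ContDiff ℝ 2 (f s)
  derivs_bounded : ∃ M, ∀ s ∈ Icc (0:ℝ) T, ∀ x,
    |derivWithin (fun u => f u x) (Icc 0 T) s| ≤ M ∧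
    ‖fderiv ℝ (f s) x‖ ≤ M ∧ ‖fderiv ℝ (fderiv ℝ (f s)) x‖ ≤ M

/-- `Z` is a weakly continuous `M(ℝ²)`-valued solution of the limiting equation: for every
`T ≥ 0`, every test function `f ∈ C_b^{1,2}([0,T] × ℝ²)` and every `t ∈ [0,T]`,
`⟨Z_t,f_t⟩ = ⟨Z_0,f_0⟩ + ∫_0^t ∫ [∂_s f_s(x) + ∇_x f_s(x)·(∫_0^s ∫ L_{s-r}(x-y) Z_r(dy) dr)
+ (σ²/2) Δ_x f_s(x) + (b1(x) + b2(x)(t-s) - d(x,Z_s)) f_s(x)] Z_s(dx) ds`. -/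
def IsLimitSolution (σ : ℝ) (L : ℝ → R2 → R2) (b1 b2 : R2 → ℝ)
    (d : R2 → FiniteMeasure R2 → ℝ) (Z : ℝ → FiniteMeasure R2) : Prop :=
  ContinuousOn Z (Ici 0) ∧
  ∀ T : ℝ, 0 ≤ T → ∀ f : ℝ → R2 → ℝ, IsTestFun T f → ∀ t ∈ Icc (0:ℝ) T,
    (∫ x, f t x ∂(Z t : Measure R2)) =
      (∫ x, f 0 x ∂(Z 0 : Measure R2)) +
      ∫ s in (0:ℝ)..t, ∫ x,
        (derivWithin (fun u => f u x) (Icc 0 T) s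
          + ⟪gradient (f s) x, driftTerm L Z s x⟫
          + (σ ^ 2 / 2) * lap2 (f s) x
          + (b1 x + b2 x * (t - s) - d x (Z s)) * f s x) ∂(Z s : Measure R2)


/-! Testing the equation against the constant function `1` kills the time-derivative, drift and
diffusion terms, so the mass `m(u) = ⟨Z_u, 1⟩` satisfies
`m(u) = m(0) + ∫_0^u ∫ (b1 + b2 (u - s) - d(·, Z_s)) dZ_s ds`.
As `d ≥ 0`, `b1 ≤ B1`, `b2 ≤ B2` and `u ≤ t`, this gives
`m(u) ≤ m(0) + ∫_0^u (B1 + B2 (t - s)) m(s) ds` for `u ∈ [0, t]`, and Grönwall's inequality with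
the weight `B1 + B2 (t - s)`, whose integral over `[0, t]` is `B1 t + B2 t² / 2`, concludes. -/

theorem integral_mono_of_nonneg_right {α : Type*} [MeasurableSpace α] {μ : Measure α}
    {f g : α → ℝ} (hg : Integrable g μ) (hg_nonneg : 0 ≤ᵐ[μ] g) (hfg : f ≤ᵐ[μ] g) :
    ∫ a, f a ∂μ ≤ ∫ a, g a ∂μ := by
  by_cases hf : Integrable f μ
  · exact integral_mono_ae hf hg hfg
  · rw [integral_undef hf]
    exact integral_nonneg_of_ae hg_nonneg

theorem intervalIntegral.integral_mono_on_of_nonneg_right {f g : ℝ → ℝ} {a b : ℝ} (hab : a ≤ b)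
    (hg : IntervalIntegrable g volume a b) (hg_nonneg : ∀ x ∈ Icc a b, 0 ≤ g x)
    (hfg : ∀ x ∈ Icc a b, f x ≤ g x) :
    ∫ x in a..b, f x ≤ ∫ x in a..b, g x := by
  by_cases hf : IntervalIntegrable f volume a b
  · exact intervalIntegral.integral_mono_on hab hf hg hfg
  · rw [intervalIntegral.integral_undef hf]
    exact intervalIntegral.integral_nonneg hab hg_nonneg

theorem ContinuousOn.hasDerivAt_primitive_of_mem_Ioo {f : ℝ → ℝ} {a b u : ℝ}
    (hf : ContinuousOn f (Icc a b)) (hu : u ∈ Ioo a b) :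
    HasDerivAt (fun v => ∫ s in a..v, f s) (f u) u :=
  intervalIntegral.integral_hasDerivAt_right
    ((hf.mono (Icc_subset_Icc_right hu.2.le)).intervalIntegrable_of_Icc hu.1.le)
    ((hf.mono Ioo_subset_Icc_self).stronglyMeasurableAtFilter isOpen_Ioo u hu)
    (hf.continuousAt (Icc_mem_nhds hu.1 hu.2))

theorem ContinuousOn.continuousOn_primitive_Icc {f : ℝ → ℝ} {a b : ℝ} (hab : a ≤ b)
    (hf : ContinuousOn f (Icc a b)) :
    ContinuousOn (fun v => ∫ s in a..v, f s) (Icc a b) := by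
  have hint : IntegrableOn f (uIcc a b) := by
    simpa only [uIcc_of_le hab] using hf.integrableOn_Icc
  simpa only [uIcc_of_le hab] using intervalIntegral.continuousOn_primitive_interval hint

theorem le_mul_exp_integral_of_le_add_integral {m k : ℝ → ℝ} {a b m₀ : ℝ} (hab : a ≤ b)
    (hm : ContinuousOn m (Icc a b)) (hk : ContinuousOn k (Icc a b))
    (hk_nonneg : ∀ u ∈ Icc a b, 0 ≤ k u)
    (h : ∀ u ∈ Icc a b, m u ≤ m₀ + ∫ s in a..u, k s * m s) :
    m b ≤ m₀ * Real.exp (∫ s in a..b, k s) := by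
  set ψ : ℝ → ℝ := fun u => m₀ + ∫ s in a..u, k s * m s
  set K : ℝ → ℝ := fun u => ∫ s in a..u, k s
  have hkm : ContinuousOn (fun s => k s * m s) (Icc a b) := hk.mul hm
  have hanti : AntitoneOn (fun u => ψ u * Real.exp (-K u)) (Icc a b) := by
    refine antitoneOn_of_hasDerivWithinAt_nonpos (convex_Icc a b)
      ((continuousOn_const.add (hkm.continuousOn_primitive_Icc hab)).mul
        (hk.continuousOn_primitive_Icc hab).neg.rexp)
      (f' := fun u => k u * (m u - ψ u) * Real.exp (-K u)) (fun u hu => ?_) (fun u hu => ?_)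
      <;> rw [interior_Icc] at hu
    · have hψ : HasDerivAt ψ (k u * m u) u :=
        (hkm.hasDerivAt_primitive_of_mem_Ioo hu).const_add m₀
      have hK : HasDerivAt (fun v => -K v) (-k u) u := (hk.hasDerivAt_primitive_of_mem_Ioo hu).neg
      exact ((hψ.mul hK.exp).congr_deriv (by ring)).hasDerivWithinAt
    · have hmu : m u ≤ ψ u := h u (Ioo_subset_Icc_self hu)
      have hku : 0 ≤ k u := hk_nonneg u (Ioo_subset_Icc_self hu)
      exact mul_nonpos_of_nonpos_of_nonneg
        (mul_nonpos_of_nonneg_of_nonpos hku (sub_nonpos.2 hmu)) (Real.exp_pos _).le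
  have hψb : ψ b * Real.exp (-K b) ≤ m₀ := by
    simpa [ψ, K] using hanti ⟨le_rfl, hab⟩ ⟨hab, le_rfl⟩ hab
  calc m b ≤ ψ b := h b ⟨hab, le_rfl⟩
    _ = ψ b * Real.exp (-K b) * Real.exp (K b) := by
      rw [mul_assoc, ← Real.exp_add, neg_add_cancel, Real.exp_zero, mul_one]
    _ ≤ m₀ * Real.exp (K b) := by gcongr

theorem integral_const_add_mul_sub (B₁ B₂ t : ℝ) :
    ∫ s in (0:ℝ)..t, (B₁ + B₂ * (t - s)) = B₁ * t + B₂ / 2 * t ^ 2 := by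
  rw [intervalIntegral.integral_add (by simp) (by apply Continuous.intervalIntegrable; fun_prop),
    intervalIntegral.integral_const_mul, intervalIntegral.integral_comp_sub_left (fun s => s)]
  simp only [intervalIntegral.integral_const, sub_zero, smul_eq_mul, sub_self, integral_id]
  ring

theorem FiniteMeasure.integral_const_eq_mass_mul {X : Type*} [MeasurableSpace X]
    (μ : FiniteMeasure X) (c : ℝ) : ∫ _, c ∂(μ : Measure X) = μ.mass * c := by
  simp [measureReal_def, ← FiniteMeasure.ennreal_mass]

theorem isTestFun_const (T c : ℝ) : IsTestFun T fun _ _ => c :=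
  ⟨⟨|c|, fun _ _ => le_rfl⟩, fun _ => contDiffOn_const, fun _ _ => contDiff_const,
    ⟨0, fun _ _ _ => ⟨by simp, by simp, by
      rw [fderiv_fun_const, fderiv_zero]; exact (norm_zero (E := R2 →L[ℝ] R2 →L[ℝ] ℝ)).le⟩⟩⟩

section IsLimitSolution

variable {σ : ℝ} {L : ℝ → R2 → R2} {b1 b2 : R2 → ℝ} {d : R2 → FiniteMeasure R2 → ℝ}
  {Z : ℝ → FiniteMeasure R2}

theorem IsLimitSolution.continuousOn_mass (hZ : IsLimitSolution σ L b1 b2 d Z) :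
    ContinuousOn (fun s => ((Z s).mass : ℝ)) (Ici 0) :=
  (NNReal.continuous_coe.comp FiniteMeasure.continuous_mass).comp_continuousOn hZ.1

theorem IsLimitSolution.mass_eq (hZ : IsLimitSolution σ L b1 b2 d Z) {u : ℝ} (hu : 0 ≤ u) :
    ((Z u).mass : ℝ) = (Z 0).mass +
      ∫ s in (0:ℝ)..u, ∫ x, (b1 x + b2 x * (u - s) - d x (Z s)) ∂(Z s : Measure R2) := by
  simpa [lap2, FiniteMeasure.integral_const_eq_mass_mul] using
    hZ.2 u hu _ (isTestFun_const u 1) u ⟨hu, le_rfl⟩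

theorem IsLimitSolution.mass_le_add_integral (hZ : IsLimitSolution σ L b1 b2 d Z)
    {B1 B2 : ℝ} (hB1 : 0 ≤ B1) (hB2 : 0 ≤ B2) (hb1 : ∀ x, b1 x ≤ B1) (hb2 : ∀ x, b2 x ≤ B2)
    (hd : ∀ x ν, 0 ≤ d x ν) {t u : ℝ} (hu : u ∈ Icc 0 t) :
    ((Z u).mass : ℝ) ≤ (Z 0).mass + ∫ s in (0:ℝ)..u, (B1 + B2 * (t - s)) * (Z s).mass := by
  have hk_nonneg : ∀ s ≤ t, 0 ≤ B1 + B2 * (t - s) := fun s hs =>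
    add_nonneg hB1 (mul_nonneg hB2 (sub_nonneg.2 hs))
  rw [hZ.mass_eq hu.1]
  gcongr
  refine intervalIntegral.integral_mono_on_of_nonneg_right hu.1 ?_
    (fun s hs => mul_nonneg (hk_nonneg s (hs.2.trans hu.2)) NNReal.zero_le_coe) fun s hs => ?_
  · exact (ContinuousOn.mul (by fun_prop) (hZ.continuousOn_mass.mono Icc_subset_Ici_self))
      |>.intervalIntegrable_of_Icc hu.1
  · calc ∫ x, (b1 x + b2 x * (u - s) - d x (Z s)) ∂(Z s : Measure R2)
          ≤ ∫ _, (B1 + B2 * (t - s)) ∂(Z s : Measure R2) := by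
            refine integral_mono_of_nonneg_right (integrable_const _)
              (ae_of_all _ fun _ => hk_nonneg s (hs.2.trans hu.2)) (ae_of_all _ fun x => ?_)
            have : b2 x * (u - s) ≤ B2 * (t - s) :=
              mul_le_mul (hb2 x) (by linarith [hu.2]) (sub_nonneg.2 hs.2) hB2
            linarith [hb1 x, hd x (Z s)]
        _ = (B1 + B2 * (t - s)) * (Z s).mass := by
            rw [FiniteMeasure.integral_const_eq_mass_mul, mul_comm]

end IsLimitSolution

theorem limitSolution_mass_bound_general
    (σ B1 B2 : ℝ) (hB1 : 0 < B1) (hB2 : 0 < B2)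
    (L : ℝ → R2 → R2)
    (b1 b2 : R2 → ℝ)
    (hb1_bd : ∀ x, b1 x ≤ B1) (hb2_bd : ∀ x, b2 x ≤ B2)
    (d : R2 → FiniteMeasure R2 → ℝ)
    (hd_nonneg : ∀ x ν, 0 ≤ d x ν)
    (Z : ℝ → FiniteMeasure R2) (hZ : IsLimitSolution σ L b1 b2 d Z) :
    ∀ t : ℝ, 0 ≤ t →
      ((Z t).mass : ℝ) ≤ ((Z 0).mass : ℝ) * Real.exp (B1 * t + B2 / 2 * t ^ 2) := by
  intro t ht
  rw [← integral_const_add_mul_sub]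
  refine le_mul_exp_integral_of_le_add_integral ht
    (hZ.continuousOn_mass.mono Icc_subset_Ici_self) (by fun_prop)
    (fun s hs => add_nonneg hB1.le (mul_nonneg hB2.le (sub_nonneg.2 hs.2)))
    (fun u hu => hZ.mass_le_add_integral hB1.le hB2.le hb1_bd hb2_bd hd_nonneg hu)

/-- **Mass bound for solutions of the limiting equation**: every solution `Z` of the limiting
equation satisfies `⟨Z_t,1⟩ ≤ ⟨Z_0,1⟩ exp(B1 t + (B2/2) t²)` for every `t ≥ 0`. -/
theorem limitSolution_mass_bound
    (σ B1 B2 C : ℝ) (hσ : 0 < σ) (hB1 : 0 < B1) (hB2 : 0 < B2) (hC : 0 < C)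
    (h1 : ℝ → ℝ) (hh1_nonneg : ∀ t, 0 ≤ h1 t) (hh1_int : IntegrableOn h1 (Ici 0))
    (L : ℝ → R2 → R2) (hL_meas : Measurable (Function.uncurry L))
    (hL_bd : ∀ t x, 0 ≤ t → ‖L t x‖ ≤ h1 t)
    (b1 b2 : R2 → ℝ) (hb1_meas : Measurable b1) (hb2_meas : Measurable b2)
    (hb1_nonneg : ∀ x, 0 ≤ b1 x) (hb2_nonneg : ∀ x, 0 ≤ b2 x)
    (hb1_bd : ∀ x, b1 x ≤ B1) (hb2_bd : ∀ x, b2 x ≤ B2)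
    (d : R2 → FiniteMeasure R2 → ℝ) (hd_meas : Measurable (Function.uncurry d))
    (hd_nonneg : ∀ x ν, 0 ≤ d x ν) (hd_bd : ∀ x ν, d x ν ≤ C * (ν.mass : ℝ))
    (Z : ℝ → FiniteMeasure R2) (hZ : IsLimitSolution σ L b1 b2 d Z) :
    ∀ t : ℝ, 0 ≤ t →
      ((Z t).mass : ℝ) ≤ ((Z 0).mass : ℝ) * Real.exp (B1 * t + B2 / 2 * t ^ 2) :=
  limitSolution_mass_bound_general σ B1 B2 hB1 hB2 L b1 b2 hb1_bd hb2_bd d hd_nonneg Z hZ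

end
end

section
/- Let h : [0,∞) → [0,∞) be measurable and nondecreasing. Then the function t ↦ ∫_0^t ( (t−s)^{−1/2} + 1 ) h(s) ds is nondecreasing on [0,∞), i.e., for all 0 ≤ t ≤ t′: ∫_0^t ((t−s)^{−1/2} + 1) h(s) ds ≤ ∫_0^{t′} ((t′−s)^{−1/2} + 1) h(s) ds. -/
open MeasureTheory Set
open scoped ENNReal

/-! Substituting `x = t - s` turns the integral into `∫_0^t (x^{-1/2} + 1) h(t - x) dx`. Increasing
`t` then only enlarges the domain of integration and, `h` being nondecreasing, the integrand. -/

theorem setLIntegral_Ioc_comp_sub_left (f : ℝ → ℝ≥0∞) (a : ℝ) :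
    ∫⁻ s in Ioc 0 a, f (a - s) = ∫⁻ x in Ico 0 a, f x := by
  have hpre : (fun s : ℝ => a - s) ⁻¹' Ico 0 a = Ioc 0 a := by
    ext s
    simp only [mem_preimage, mem_Ico, mem_Ioc]
    constructor <;> rintro ⟨h₁, h₂⟩ <;> constructor <;> linarith
  rw [← hpre]
  exact (Measure.measurePreserving_sub_left volume a).setLIntegral_comp_preimage_emb
    (MeasurableEquiv.subLeft a).measurableEmbedding f _

theorem setLIntegral_Ico_mul_comp_sub_mono {k h : ℝ → ℝ} (hk : ∀ x, 0 ≤ x → 0 ≤ k x)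
    (hh : MonotoneOn h (Ici 0)) {t t' : ℝ} (htt' : t ≤ t') :
    ∫⁻ x in Ico 0 t, ENNReal.ofReal (k x * h (t - x)) ≤
      ∫⁻ x in Ico 0 t', ENNReal.ofReal (k x * h (t' - x)) :=
  calc ∫⁻ x in Ico 0 t, ENNReal.ofReal (k x * h (t - x))
      ≤ ∫⁻ x in Ico 0 t, ENNReal.ofReal (k x * h (t' - x)) := by
        refine setLIntegral_mono' measurableSet_Ico fun x ⟨hx₀, hxt⟩ => ?_
        have hle : h (t - x) ≤ h (t' - x) :=
          hh (mem_Ici.2 (by linarith)) (mem_Ici.2 (by linarith)) (by linarith)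
        exact ENNReal.ofReal_le_ofReal (mul_le_mul_of_nonneg_left hle (hk x hx₀))
    _ ≤ ∫⁻ x in Ico 0 t', ENNReal.ofReal (k x * h (t' - x)) :=
        lintegral_mono_set (Ico_subset_Ico_right htt')

theorem singular_kernel_integral_monotone_general (h : ℝ → ℝ) (hmono : MonotoneOn h (Ici 0)) :
    ∀ t t' : ℝ, 0 ≤ t → t ≤ t' →
      (∫⁻ s in Ioc (0:ℝ) t, ENNReal.ofReal (((t - s) ^ (-(1:ℝ)/2) + 1) * h s)) ≤
        ∫⁻ s in Ioc (0:ℝ) t', ENNReal.ofReal (((t' - s) ^ (-(1:ℝ)/2) + 1) * h s) := by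
  intro t t' _ htt'
  have hreflect : ∀ a : ℝ, ∫⁻ s in Ioc (0:ℝ) a, ENNReal.ofReal (((a - s) ^ (-(1:ℝ)/2) + 1) * h s) =
      ∫⁻ x in Ico (0:ℝ) a, ENNReal.ofReal ((x ^ (-(1:ℝ)/2) + 1) * h (a - x)) := fun a => by
    simpa only [sub_sub_cancel] using setLIntegral_Ioc_comp_sub_left
      (fun x => ENNReal.ofReal ((x ^ (-(1:ℝ)/2) + 1) * h (a - x))) a
  rw [hreflect, hreflect]
  exact setLIntegral_Ico_mul_comp_sub_mono (fun x hx => by positivity) hmono htt'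

/-- **Monotonicity of the singular-kernel integral**: if `h : [0,∞) → [0,∞)` is measurable
and nondecreasing, then `t ↦ ∫_0^t ((t-s)^{-1/2} + 1) h(s) ds` is nondecreasing, i.e. for
all `0 ≤ t ≤ t'`, `∫_0^t ((t-s)^{-1/2} + 1) h(s) ds ≤ ∫_0^{t'} ((t'-s)^{-1/2} + 1) h(s) ds`
(the integrals being Lebesgue integrals of nonnegative functions, possibly infinite). -/
theorem singular_kernel_integral_monotone (h : ℝ → ℝ) (hmeas : Measurable h)
    (hnonneg : ∀ s, 0 ≤ s → 0 ≤ h s) (hmono : MonotoneOn h (Ici 0)) :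
    ∀ t t' : ℝ, 0 ≤ t → t ≤ t' →
      (∫⁻ s in Ioc (0:ℝ) t, ENNReal.ofReal (((t - s) ^ (-(1:ℝ)/2) + 1) * h s)) ≤
        ∫⁻ s in Ioc (0:ℝ) t', ENNReal.ofReal (((t' - s) ^ (-(1:ℝ)/2) + 1) * h s) :=
  singular_kernel_integral_monotone_general h hmono
end
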